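/- Let D=(E,𝓕) be a normal delta-matroid whose twist polynomial is a monomial, i.e., there exists k with w(D*A)=k for all A⊆E. Then there do not exist distinct elements e,f∈E such that the restriction D|_{{e,f}} has feasible set collection exactly {∅,{e},{f}}. -/
import Mathlib


open Finset
open scoped symmDiff

noncomputable section

namespace DeltaMatroid

variable {α : Type*} [DecidableEq α]

/-- A delta-matroid on ground set `E` with feasible sets `F`: `F` is nonempty, consists of
subsets of `E`, and satisfies the symmetric exchange axiom. -/
def IsDeltaMatroid (E : Finset α) (F : Finset (Finset α)) : Prop :=
  F.Nonempty ∧ (∀ X ∈ F, X ⊆ E) ∧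
    ∀ X ∈ F, ∀ Y ∈ F, ∀ u ∈ X ∆ Y, ∃ v ∈ X ∆ Y, X ∆ ({u, v} : Finset α) ∈ F

/-- The twist `D * A` of the feasible sets by a subset `A`. -/
def twist (F : Finset (Finset α)) (A : Finset α) : Finset (Finset α) :=
  F.image fun X => A ∆ X

/-- Maximum cardinality of a feasible set. -/
def maxCard (F : Finset (Finset α)) : ℕ := F.sup Finset.card

/-- Minimum cardinality of a feasible set. -/
def minCard (F : Finset (Finset α)) : ℕ := sInf (Finset.card '' (F : Set (Finset α)))

/-- The width `w(D)`. -/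
def width (F : Finset (Finset α)) : ℕ := maxCard F - minCard F

/-- Feasible sets of minimum cardinality. -/
def Fmin (F : Finset (Finset α)) : Finset (Finset α) := F.filter fun X => X.card = minCard F

/-- Feasible sets of maximum cardinality. -/
def Fmax (F : Finset (Finset α)) : Finset (Finset α) := F.filter fun X => X.card = maxCard F

/-- `e` is a ribbon loop: it lies in no minimum-cardinality feasible set. -/
def IsRibbonLoop (F : Finset (Finset α)) (e : α) : Prop := ∀ X ∈ Fmin F, e ∉ X

/-- A ribbon loop is non-orientable if it is also a ribbon loop of `D * e`. -/
def IsNonorientableRibbonLoop (F : Finset (Finset α)) (e : α) : Prop :=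
  IsRibbonLoop F e ∧ IsRibbonLoop (twist F {e}) e

/-- A ribbon loop is orientable if it is not a ribbon loop of `D * e`. -/
def IsOrientableRibbonLoop (F : Finset (Finset α)) (e : α) : Prop :=
  IsRibbonLoop F e ∧ ¬ IsRibbonLoop (twist F {e}) e

/-- `e` is a loop: it lies in no feasible set. -/
def IsLoop (F : Finset (Finset α)) (e : α) : Prop := ∀ X ∈ F, e ∉ X

/-- `e` is a coloop: it lies in every feasible set. -/
def IsColoop (F : Finset (Finset α)) (e : α) : Prop := ∀ X ∈ F, e ∈ X

/-- Contraction `D / e`. -/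
def contract (F : Finset (Finset α)) (e : α) : Finset (Finset α) :=
  if ∀ X ∈ F, e ∉ X then F
  else (F.filter fun X => e ∈ X).image fun X => X.erase e

/-- Deletion `D \ e`. -/
def delete (F : Finset (Finset α)) (e : α) : Finset (Finset α) :=
  if ∀ X ∈ F, e ∈ X then F.image fun X => X.erase e
  else F.filter fun X => e ∉ X

/-- Deletion of every element of `A` (in some order; the order does not matter). -/
def deleteSet (F : Finset (Finset α)) (A : Finset α) : Finset (Finset α) :=
  A.toList.foldl delete F

/-- The restriction `D |_A = D \ (E \ A)` of a delta-matroid with ground set `E`. -/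
def restrict (F : Finset (Finset α)) (E A : Finset α) : Finset (Finset α) :=
  deleteSet F (E \ A)

/-- Feasible sets of the direct sum `D ⊕ D'`. -/
def directSum (F G : Finset (Finset α)) : Finset (Finset α) :=
  (F ×ˢ G).image fun p => p.1 ∪ p.2

/-- A delta-matroid is connected if it is not a direct sum of two delta-matroids on
nonempty ground sets. -/
def IsConnected (E : Finset α) (F : Finset (Finset α)) : Prop :=
  ¬ ∃ (E₁ E₂ : Finset α) (F₁ F₂ : Finset (Finset α)),
      E₁.Nonempty ∧ E₂.Nonempty ∧ Disjoint E₁ E₂ ∧ E = E₁ ∪ E₂ ∧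
      IsDeltaMatroid E₁ F₁ ∧ IsDeltaMatroid E₂ F₂ ∧ F = directSum F₁ F₂

/-- A delta-matroid is even if all feasible sets have the same parity of cardinality. -/
def IsEvenDM (F : Finset (Finset α)) : Prop :=
  ∀ X ∈ F, ∀ Y ∈ F, X.card % 2 = Y.card % 2

variable {ι : Type*} [Fintype ι] [DecidableEq ι]

/-- The feasible sets of `D(C)`: subsets `A` whose principal submatrix `C[A]` is nonsingular
(over `GF(2)`, i.e. has nonzero determinant); `C[∅]` is nonsingular by convention. -/
def binaryFeasible (C : Matrix ι ι (ZMod 2)) : Finset (Finset ι) :=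
  Finset.univ.filter fun A =>
    (C.submatrix (fun x : {a // a ∈ A} => (x : ι)) (fun x : {a // a ∈ A} => (x : ι))).det ≠ 0

/-- The (simple-graph part of the) intersection graph `G_D` of a normal binary delta-matroid
`D(C)`: distinct `u, v` adjacent iff `C u v = 1`.  Loops are recorded by the diagonal of `C`. -/
def interGraph (C : Matrix ι ι (ZMod 2)) : SimpleGraph ι :=
  SimpleGraph.fromRel fun u v => C u v = 1



section Helpers

private lemma empty_symmDiff' (X : Finset α) : (∅ : Finset α) ∆ X = X := by
  rw [← Finset.bot_eq_empty, bot_symmDiff]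

private lemma twist_empty (F : Finset (Finset α)) : twist F ∅ = F := by
  ext X
  simp [twist, empty_symmDiff']

private lemma minCard_le {G : Finset (Finset α)} {X : Finset α} (hX : X ∈ G) :
    minCard G ≤ X.card :=
  Nat.sInf_le ⟨X, Finset.mem_coe.mpr hX, rfl⟩

private lemma minCard_eq_zero {G : Finset (Finset α)} (h : (∅ : Finset α) ∈ G) :
    minCard G = 0 :=
  Nat.eq_zero_of_le_zero (by simpa using minCard_le h)

private lemma le_maxCard {G : Finset (Finset α)} {X : Finset α} (hX : X ∈ G) :
    X.card ≤ maxCard G :=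
  Finset.le_sup hX

private lemma exists_maxCard {G : Finset (Finset α)} (h : G.Nonempty) :
    ∃ X ∈ G, X.card = maxCard G := by
  obtain ⟨X, hX, hX2⟩ := Finset.exists_mem_eq_sup G h Finset.card
  exact ⟨X, hX, hX2.symm⟩

private lemma delete_eq_filter {G : Finset (Finset α)} (hG : (∅ : Finset α) ∈ G) (g : α) :
    delete G g = G.filter (fun X => g ∉ X) := by
  unfold delete
  rw [if_neg]
  intro hall
  exact (Finset.notMem_empty g) (hall ∅ hG)

private lemma foldl_delete (l : List α) :
    ∀ (G : Finset (Finset α)), (∅ : Finset α) ∈ G →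
      l.foldl delete G = G.filter (fun X => ∀ g ∈ l, g ∉ X) := by
  induction l with
  | nil =>
      intro G hG
      rw [List.foldl_nil]
      exact (Finset.filter_true_of_mem (fun X _ => by simp)).symm
  | cons g l ih =>
      intro G hG
      rw [List.foldl_cons, delete_eq_filter hG g,
        ih _ (Finset.mem_filter.mpr ⟨hG, Finset.notMem_empty g⟩), Finset.filter_filter]
      apply Finset.filter_congr
      intro X _
      rw [List.forall_mem_cons]

end Helpers

/-- If the twist polynomial of a normal delta-matroid `D` is a monomial, then there are no
distinct `e, f ∈ E` with `D |_{e,f}` having feasible sets exactly `{∅, {e}, {f}}`. -/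
theorem no_restriction_two_singletons (E : Finset α) (F : Finset (Finset α))
    (hD : IsDeltaMatroid E F) (hnorm : ∅ ∈ F)
    (hmono : ∃ k : ℕ, ∀ A ⊆ E, width (twist F A) = k) :
    ¬ ∃ e ∈ E, ∃ f ∈ E, e ≠ f ∧
        restrict F E {e, f} = ({∅, {e}, {f}} : Finset (Finset α)) := by
  rintro ⟨e, heE, f, hfE, hef_ne, hres⟩
  obtain ⟨hFne, hsubE, hexch⟩ := hD
  obtain ⟨k, hk⟩ := hmono
  -- Unfold the restriction into a filter
  have hres' : F.filter (fun X => ∀ g ∈ (E \ {e, f}).toList, g ∉ X)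
      = ({∅, {e}, {f}} : Finset (Finset α)) := by
    have h2 : deleteSet F (E \ {e, f}) = ({∅, {e}, {f}} : Finset (Finset α)) := hres
    unfold deleteSet at h2
    rwa [foldl_delete _ F hnorm] at h2
  -- {e} ∈ F
  have he1 : ({e} : Finset α) ∈ F := by
    have hmem : ({e} : Finset α) ∈ ({∅, {e}, {f}} : Finset (Finset α)) := by simp
    rw [← hres'] at hmem
    exact (Finset.mem_filter.mp hmem).1
  -- {f} ∈ F
  have hf1 : ({f} : Finset α) ∈ F := by
    have hmem : ({f} : Finset α) ∈ ({∅, {e}, {f}} : Finset (Finset α)) := by simp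
    rw [← hres'] at hmem
    exact (Finset.mem_filter.mp hmem).1
  -- {e,f} ∉ F
  have hef : ({e, f} : Finset α) ∉ F := by
    intro hmem
    have h1 : ({e, f} : Finset α) ∈ F.filter (fun X => ∀ g ∈ (E \ {e, f}).toList, g ∉ X) := by
      refine Finset.mem_filter.mpr ⟨hmem, ?_⟩
      intro g hg hgX
      rw [Finset.mem_toList, Finset.mem_sdiff] at hg
      exact hg.2 hgX
    rw [hres'] at h1
    simp only [Finset.mem_insert, Finset.mem_singleton] at h1
    rcases h1 with h | h | h
    · have : e ∈ (∅ : Finset α) := h ▸ (Finset.mem_insert_self e {f})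
      exact Finset.notMem_empty e this
    · have hfe : f ∈ ({e} : Finset α) := h ▸ (by simp : f ∈ ({e, f} : Finset α))
      exact hef_ne (Finset.mem_singleton.mp hfe).symm
    · have hee : e ∈ ({f} : Finset α) := h ▸ (Finset.mem_insert_self e {f})
      exact hef_ne (Finset.mem_singleton.mp hee)
  -- k = maxCard F
  have hM : k = maxCard F := by
    have h0 := hk ∅ (Finset.empty_subset E)
    rw [twist_empty] at h0
    unfold width at h0
    rw [minCard_eq_zero hnorm] at h0
    omega
  have hM1 : 1 ≤ maxCard F := by
    have := le_maxCard he1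
    simpa using this
  -- every maximum-cardinality feasible set contains any x with {x} ∈ F
  have key : ∀ x : α, x ∈ E → ({x} : Finset α) ∈ F →
      ∀ X ∈ F, X.card = maxCard F → x ∈ X := by
    intro x hxE hxF X hXF hXcard
    by_contra hxX
    have hw := hk {x} (Finset.singleton_subset_iff.mpr hxE)
    have hmin0 : minCard (twist F {x}) = 0 := by
      apply minCard_eq_zero
      refine Finset.mem_image.mpr ⟨{x}, hxF, ?_⟩
      rw [symmDiff_self, Finset.bot_eq_empty]
    unfold width at hw
    rw [hmin0] at hw
    have hmax : maxCard (twist F {x}) = maxCard F := by omega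
    have hmem : ({x} : Finset α) ∆ X ∈ twist F {x} :=
      Finset.mem_image_of_mem _ hXF
    have hXeq : ({x} : Finset α) ∆ X = insert x X := by
      ext a
      simp only [Finset.mem_symmDiff, Finset.mem_singleton, Finset.mem_insert]
      constructor
      · rintro (⟨rfl, _⟩ | ⟨haX, _⟩)
        · exact Or.inl rfl
        · exact Or.inr haX
      · rintro (rfl | haX)
        · exact Or.inl ⟨rfl, hxX⟩
        · exact Or.inr ⟨haX, fun h => hxX (h ▸ haX)⟩
    have hcard : (({x} : Finset α) ∆ X).card = X.card + 1 := by
      rw [hXeq, Finset.card_insert_of_notMem hxX]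
    have hle := le_maxCard hmem
    rw [hcard, hmax, hXcard] at hle
    omega
  -- twist by {e,f}
  have hefE : ({e, f} : Finset α) ⊆ E :=
    Finset.insert_subset_iff.mpr ⟨heE, Finset.singleton_subset_iff.mpr hfE⟩
  have hwef := hk {e, f} hefE
  have hfmem : ({f} : Finset α) ∈ twist F {e, f} := by
    refine Finset.mem_image.mpr ⟨{e}, he1, ?_⟩
    ext a
    simp only [Finset.mem_symmDiff, Finset.mem_insert, Finset.mem_singleton]
    constructor
    · rintro (⟨h1, hne⟩ | ⟨rfl, h⟩)
      · rcases h1 with rfl | rfl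
        · exact absurd rfl hne
        · rfl
      · exact absurd (Or.inl rfl) h
    · rintro rfl
      exact Or.inl ⟨Or.inr rfl, fun h => hef_ne h.symm⟩
  have hmin1 : minCard (twist F {e, f}) = 1 := by
    have hle : minCard (twist F {e, f}) ≤ 1 := by simpa using minCard_le hfmem
    have hne0 : minCard (twist F {e, f}) ≠ 0 := by
      intro h0
      rcases Nat.sInf_eq_zero.mp h0 with h | h
      · obtain ⟨Y, hY, hYc⟩ := h
        rw [Finset.mem_coe] at hY
        obtain ⟨X, hXF, hXY⟩ := Finset.mem_image.mp hY
        have hbot : ({e, f} : Finset α) ∆ X = ∅ := by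
          rw [hXY]; exact Finset.card_eq_zero.mp hYc
        rw [← Finset.bot_eq_empty, symmDiff_eq_bot] at hbot
        exact hef (hbot ▸ hXF)
      · rw [Set.eq_empty_iff_forall_notMem] at h
        exact h 1 ⟨{f}, Finset.mem_coe.mpr hfmem, Finset.card_singleton f⟩
    omega
  have hmax2 : maxCard (twist F {e, f}) = maxCard F + 1 := by
    unfold width at hwef
    rw [hmin1] at hwef
    have h1le : 1 ≤ maxCard (twist F {e, f}) := by
      have := le_maxCard hfmem
      simpa using this
    omega
  -- obtain Xh of size M - 1 disjoint from {e,f}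
  obtain ⟨Y, hYT2, hYmax⟩ := exists_maxCard (show (twist F {e, f}).Nonempty from hFne.image _)
  obtain ⟨Xh, hXhF, hXhY⟩ := Finset.mem_image.mp hYT2
  have hYc : (({e, f} : Finset α) ∆ Xh).card = maxCard F + 1 := by
    rw [hXhY, hYmax, hmax2]
  have hsplit : (({e, f} : Finset α) ∆ Xh).card
      = (({e, f} : Finset α) \ Xh).card + (Xh \ ({e, f} : Finset α)).card := by
    rw [symmDiff_def, Finset.sup_eq_union]
    exact Finset.card_union_of_disjoint disjoint_sdiff_sdiff
  have hXhcard : Xh.card ≤ maxCard F := le_maxCard hXhF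
  have heXh : e ∉ Xh := by
    intro heXh
    have h1 : (({e, f} : Finset α) \ Xh) ⊆ {f} := by
      intro a ha
      rw [Finset.mem_sdiff] at ha
      rcases Finset.mem_insert.mp ha.1 with h | h
      · subst h
        exact absurd heXh ha.2
      · exact h
    have h1c : (({e, f} : Finset α) \ Xh).card ≤ 1 := by
      have := Finset.card_le_card h1
      simpa using this
    have h2 : (Xh \ ({e, f} : Finset α)).card < Xh.card := by
      apply Finset.card_lt_card
      rw [Finset.ssubset_iff_of_subset (Finset.sdiff_subset)]
      exact ⟨e, heXh, by simp⟩
    omega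
  have hfXh : f ∉ Xh := by
    intro hfXh
    have h1 : (({e, f} : Finset α) \ Xh) ⊆ {e} := by
      intro a ha
      rw [Finset.mem_sdiff] at ha
      rcases Finset.mem_insert.mp ha.1 with h | h
      · subst h
        exact Finset.mem_singleton_self a
      · rw [Finset.mem_singleton] at h
        subst h
        exact absurd hfXh ha.2
    have h1c : (({e, f} : Finset α) \ Xh).card ≤ 1 := by
      have := Finset.card_le_card h1
      simpa using this
    have h2 : (Xh \ ({e, f} : Finset α)).card < Xh.card := by
      apply Finset.card_lt_card
      rw [Finset.ssubset_iff_of_subset (Finset.sdiff_subset)]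
      exact ⟨f, hfXh, by simp⟩
    omega
  have hdisjef : Disjoint ({e, f} : Finset α) Xh := by
    rw [Finset.disjoint_left]
    intro a ha
    rcases Finset.mem_insert.mp ha with rfl | ha
    · exact heXh
    · rw [Finset.mem_singleton] at ha
      subst ha
      exact hfXh
  have hXh2 : Xh.card + 2 = maxCard F + 1 := by
    have h1 : (({e, f} : Finset α) \ Xh) = {e, f} :=
      Finset.sdiff_eq_self_iff_disjoint.mpr hdisjef
    have h2 : (Xh \ ({e, f} : Finset α)) = Xh :=
      Finset.sdiff_eq_self_iff_disjoint.mpr hdisjef.symm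
    have h3 : ({e, f} : Finset α).card = 2 := Finset.card_pair hef_ne
    rw [hsplit, h1, h2, h3] at hYc
    omega
  -- choose a maximum feasible set Z minimizing |Z ∆ Xh|
  have hSne : (F.filter (fun Z => Z.card = maxCard F)).Nonempty := by
    obtain ⟨Z0, hZ0, hZ0c⟩ := exists_maxCard hFne
    exact ⟨Z0, Finset.mem_filter.mpr ⟨hZ0, hZ0c⟩⟩
  obtain ⟨Z, hZS, hZmin⟩ :=
    Finset.exists_min_image (F.filter (fun Z => Z.card = maxCard F))
      (fun Z => (Z ∆ Xh).card) hSne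
  obtain ⟨hZF, hZcard⟩ := Finset.mem_filter.mp hZS
  have heZ : e ∈ Z := key e heE he1 Z hZF hZcard
  have hfZ : f ∈ Z := key f hfE hf1 Z hZF hZcard
  by_cases hsub : Xh ⊆ Z
  · -- then Z has at least M+1 elements, contradiction
    have h1 : insert e (insert f Xh) ⊆ Z := by
      intro a ha
      rcases Finset.mem_insert.mp ha with rfl | ha
      · exact heZ
      rcases Finset.mem_insert.mp ha with rfl | ha
      · exact hfZ
      · exact hsub ha
    have hc : (insert e (insert f Xh)).card = Xh.card + 2 := by
      rw [Finset.card_insert_of_notMem (by simp [hef_ne, heXh]),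
        Finset.card_insert_of_notMem hfXh]
    have hle := Finset.card_le_card h1
    rw [hc, hZcard] at hle
    omega
  · obtain ⟨u, huXh, huZ⟩ := Finset.not_subset.mp hsub
    have humem : u ∈ Z ∆ Xh := Finset.mem_symmDiff.mpr (Or.inr ⟨huXh, huZ⟩)
    obtain ⟨v, hv, hW⟩ := hexch Z hZF Xh hXhF u humem
    rcases Finset.mem_symmDiff.mp hv with ⟨hvZ, hvXh⟩ | ⟨hvXh, hvZ⟩
    · -- v ∈ Z \ Xh : the exchange produces a maximum set strictly closer to Xh
      have hune : u ≠ v := fun h => huZ (h ▸ hvZ)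
      have hWeq : Z ∆ ({u, v} : Finset α) = insert u (Z.erase v) := by
        ext a
        simp only [Finset.mem_symmDiff, Finset.mem_insert, Finset.mem_singleton,
          Finset.mem_erase]
        constructor
        · rintro (⟨haZ, hn⟩ | ⟨(rfl | rfl), hnZ⟩)
          · push_neg at hn
            exact Or.inr ⟨hn.2, haZ⟩
          · exact Or.inl rfl
          · exact absurd hvZ hnZ
        · rintro (rfl | ⟨hav, haZ⟩)
          · exact Or.inr ⟨Or.inl rfl, huZ⟩
          · refine Or.inl ⟨haZ, ?_⟩
            push_neg
            exact ⟨fun h => absurd (h ▸ haZ) huZ, hav⟩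
      have hWcard : (Z ∆ ({u, v} : Finset α)).card = maxCard F := by
        rw [hWeq, Finset.card_insert_of_notMem (fun h => huZ (Finset.mem_of_mem_erase h)),
          Finset.card_erase_of_mem hvZ, hZcard]
        omega
      have hWS : Z ∆ ({u, v} : Finset α) ∈ F.filter (fun Z => Z.card = maxCard F) :=
        Finset.mem_filter.mpr ⟨hW, hWcard⟩
      have hmin := hZmin _ hWS
      have hsubuv : ({u, v} : Finset α) ⊆ Z ∆ Xh := by
        intro a ha
        rcases Finset.mem_insert.mp ha with rfl | ha
        · exact humem
        · rw [Finset.mem_singleton] at ha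
          subst ha
          exact Finset.mem_symmDiff.mpr (Or.inl ⟨hvZ, hvXh⟩)
      have hWX : (Z ∆ ({u, v} : Finset α)) ∆ Xh = (Z ∆ Xh) \ ({u, v} : Finset α) := by
        rw [symmDiff_right_comm]
        ext a
        simp only [Finset.mem_symmDiff, Finset.mem_sdiff]
        constructor
        · rintro (⟨h1, h2⟩ | ⟨h1, h2⟩)
          · exact ⟨h1, h2⟩
          · exact absurd (Finset.mem_symmDiff.mp (hsubuv h1)) h2
        · rintro ⟨h1, h2⟩
          exact Or.inl ⟨h1, h2⟩
      have hcuv : ({u, v} : Finset α).card = 2 := Finset.card_pair hune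
      have h2le : 2 ≤ (Z ∆ Xh).card := by
        have := Finset.card_le_card hsubuv
        rw [hcuv] at this
        exact this
      have hWXcard : ((Z ∆ ({u, v} : Finset α)) ∆ Xh).card = (Z ∆ Xh).card - 2 := by
        rw [hWX, Finset.card_sdiff_of_subset hsubuv, hcuv]
      rw [hWXcard] at hmin
      omega
    · -- v ∈ Xh \ Z : the exchange set is too large
      have hdisj : Disjoint Z ({u, v} : Finset α) := by
        rw [Finset.disjoint_right]
        intro a ha
        rcases Finset.mem_insert.mp ha with rfl | ha
        · exact huZ
        · rw [Finset.mem_singleton] at ha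
          subst ha
          exact hvZ
      have hWeq : Z ∆ ({u, v} : Finset α) = Z ∪ {u, v} := by
        rw [hdisj.symmDiff_eq_sup]
        rfl
      have hc : (Z ∆ ({u, v} : Finset α)).card = maxCard F + ({u, v} : Finset α).card := by
        rw [hWeq, Finset.card_union_of_disjoint hdisj, hZcard]
      have h1le : 1 ≤ ({u, v} : Finset α).card :=
        Finset.card_pos.mpr ⟨u, Finset.mem_insert_self u {v}⟩
      have hle := le_maxCard hW
      omega

end DeltaMatroid

end
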